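/- arXiv:2603.27488 — 3 statements merged into one kernel-verified Lean document; each statement's English description precedes it below -/
import Mathlib

section
/- Let μ be a measure on a space Z, let p : Z → ℝ≥0 be a probability density with respect to μ, let L : Z → ℝ≥0 be a measurable likelihood function, and let q̃ : Z → ℝ≥0 be a measurable function with support contained in the support of p. For any γ ∈ (0,1), the log-evidence satisfies log ∫ p(z) L(z) dμ ≥ (1/(1-γ)) · log ∫ q̃(z) L(z)^{1-γ} dμ − (γ/(1-γ)) · log ∫ q̃(z)^{1/γ} p(z)^{1−1/γ} dμ, provided all integrals are finite and positive. -/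
open MeasureTheory Real

/-! Writing `q L^(1-γ) = (p L)^(1-γ) · (q^(1/γ) p^(1-1/γ))^γ` (valid since `q` vanishes where
`p` does), Hölder's inequality with exponents `1/(1-γ)` and `1/γ` bounds `∫ q L^(1-γ)` by
`(∫ p L)^(1-γ) (∫ q^(1/γ) p^(1-1/γ))^γ`; taking logarithms gives the bound. -/

theorem integral_rpow_mul_rpow_le {α : Type*} [MeasurableSpace α] {μ : Measure α}
    {f g : α → ℝ} (hf₀ : 0 ≤ᵐ[μ] f) (hg₀ : 0 ≤ᵐ[μ] g) (hf : Integrable f μ)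
    (hg : Integrable g μ) {p q : ℝ} (hp : 0 ≤ p) (hq : 0 ≤ q) (hpq : p + q = 1) :
    ∫ a, f a ^ p * g a ^ q ∂μ ≤ (∫ a, f a ∂μ) ^ p * (∫ a, g a ∂μ) ^ q := by
  have hf' := hf.aestronglyMeasurable.aemeasurable
  have hg' := hg.aestronglyMeasurable.aemeasurable
  have hofReal : (fun a => ENNReal.ofReal (f a ^ p * g a ^ q))
      =ᵐ[μ] fun a => ENNReal.ofReal (f a) ^ p * ENNReal.ofReal (g a) ^ q := by
    filter_upwards [hf₀, hg₀] with a ha hb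
    rw [ENNReal.ofReal_mul (rpow_nonneg ha p), ENNReal.ofReal_rpow_of_nonneg ha hp,
      ENNReal.ofReal_rpow_of_nonneg hb hq]
  have hlintegral : ∫⁻ a, ENNReal.ofReal (f a ^ p * g a ^ q) ∂μ
      ≤ ENNReal.ofReal ((∫ a, f a ∂μ) ^ p * (∫ a, g a ∂μ) ^ q) := by
    rw [lintegral_congr_ae hofReal,
      ENNReal.ofReal_mul (rpow_nonneg (integral_nonneg_of_ae hf₀) p),
      ← ENNReal.ofReal_rpow_of_nonneg (integral_nonneg_of_ae hf₀) hp,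
      ← ENNReal.ofReal_rpow_of_nonneg (integral_nonneg_of_ae hg₀) hq,
      ofReal_integral_eq_lintegral_ofReal hf hf₀, ofReal_integral_eq_lintegral_ofReal hg hg₀]
    exact ENNReal.lintegral_mul_norm_pow_le hf'.ennreal_ofReal hg'.ennreal_ofReal hp hq hpq
  have hnonneg : 0 ≤ᵐ[μ] fun a => f a ^ p * g a ^ q := by
    filter_upwards [hf₀, hg₀] with a ha hb
    exact mul_nonneg (rpow_nonneg ha p) (rpow_nonneg hb q)
  rw [integral_eq_lintegral_of_nonneg_ae hnonneg
    (by fun_prop : AEMeasurable (fun a => f a ^ p * g a ^ q) μ).aestronglyMeasurable]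
  exact ENNReal.toReal_le_of_le_ofReal
    (mul_nonneg (rpow_nonneg (integral_nonneg_of_ae hf₀) p)
      (rpow_nonneg (integral_nonneg_of_ae hg₀) q)) hlintegral

theorem mul_rpow_one_sub_mul_rpow_eq {p l q γ : ℝ} (hγ : γ ≠ 0) (hp : 0 ≤ p) (hl : 0 ≤ l)
    (hq : 0 ≤ q) (hpq : p = 0 → q = 0) :
    (p * l) ^ (1 - γ) * (q ^ (1 / γ) * p ^ (1 - 1 / γ)) ^ γ = q * l ^ (1 - γ) := by
  rcases hp.eq_or_lt with rfl | hp
  · simp [hpq rfl, zero_rpow hγ, zero_rpow (inv_ne_zero hγ)]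
  rw [mul_rpow hp.le hl, mul_rpow (by positivity) (by positivity), ← rpow_mul hq,
    ← rpow_mul hp.le, one_div_mul_cancel hγ, rpow_one]
  calc p ^ (1 - γ) * l ^ (1 - γ) * (q * p ^ ((1 - 1 / γ) * γ))
      = q * l ^ (1 - γ) * p ^ ((1 - γ) + (1 - 1 / γ) * γ) := by rw [rpow_add hp]; ring
    _ = q * l ^ (1 - γ) := by rw [show (1 - γ) + (1 - 1 / γ) * γ = 0 by field_simp; ring,
        rpow_zero, mul_one]

theorem log_ge_of_le_rpow_mul_rpow {x y w γ : ℝ} (hx : 0 < x) (hy : 0 < y) (hw : 0 < w)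
    (hγ : γ < 1) (h : y ≤ x ^ (1 - γ) * w ^ γ) :
    log x ≥ 1 / (1 - γ) * log y - γ / (1 - γ) * log w := by
  have hlog : log y ≤ (1 - γ) * log x + γ * log w := by
    simpa [log_mul (rpow_pos_of_pos hx _).ne' (rpow_pos_of_pos hw _).ne', log_rpow hx,
      log_rpow hw] using log_le_log hy h
  have hβ : 0 < 1 - γ := sub_pos.mpr hγ
  have hgap : log x - (1 / (1 - γ) * log y - γ / (1 - γ) * log w)
      = ((1 - γ) * log x + γ * log w - log y) / (1 - γ) := by field_simp; ring
  rw [ge_iff_le, ← sub_nonneg, hgap]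
  exact div_nonneg (by linarith) hβ.le

theorem fractional_lower_bound_general
    {Z : Type*} [MeasurableSpace Z] (μ : Measure Z)
    (p L q : Z → ℝ) (γ : ℝ) (hγ : γ ∈ Set.Ioo (0:ℝ) 1)
    (hp : ∀ z, 0 ≤ p z) (hL : ∀ z, 0 ≤ L z) (hq : ∀ z, 0 ≤ q z)
    (hsupp : ∀ z, p z = 0 → q z = 0)
    (h1 : Integrable (fun z => p z * L z) μ)
    (h1pos : 0 < ∫ z, p z * L z ∂μ)
    (h2pos : 0 < ∫ z, q z * L z ^ (1 - γ) ∂μ)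
    (h3 : Integrable (fun z => q z ^ (1/γ) * p z ^ (1 - 1/γ)) μ)
    (h3pos : 0 < ∫ z, q z ^ (1/γ) * p z ^ (1 - 1/γ) ∂μ) :
    Real.log (∫ z, p z * L z ∂μ) ≥
      (1/(1-γ)) * Real.log (∫ z, q z * L z ^ (1 - γ) ∂μ)
      - (γ/(1-γ)) * Real.log (∫ z, q z ^ (1/γ) * p z ^ (1 - 1/γ) ∂μ) := by
  obtain ⟨hγ0, hγ1⟩ := hγ
  refine log_ge_of_le_rpow_mul_rpow h1pos h2pos h3pos hγ1 ?_
  calc ∫ z, q z * L z ^ (1 - γ) ∂μ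
      = ∫ z, (p z * L z) ^ (1 - γ) * (q z ^ (1/γ) * p z ^ (1 - 1/γ)) ^ γ ∂μ := by
        simp_rw [mul_rpow_one_sub_mul_rpow_eq hγ0.ne' (hp _) (hL _) (hq _) (hsupp _)]
    _ ≤ _ := integral_rpow_mul_rpow_le
        (.of_forall fun z => mul_nonneg (hp z) (hL z))
        (.of_forall fun z => mul_nonneg (rpow_nonneg (hq z) _) (rpow_nonneg (hp z) _))
        h1 h3 (by linarith) hγ0.le (by ring)

/-- Fractional-posterior lower bound `L_γ` from Hölder's inequality, `γ ∈ (0,1)`. -/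
theorem fractional_lower_bound
    {Z : Type*} [MeasurableSpace Z] (μ : Measure Z)
    (p L q : Z → ℝ) (γ : ℝ) (hγ : γ ∈ Set.Ioo (0:ℝ) 1)
    (hp : ∀ z, 0 ≤ p z) (hL : ∀ z, 0 ≤ L z) (hq : ∀ z, 0 ≤ q z)
    (hpm : Measurable p) (hLm : Measurable L) (hqm : Measurable q)
    (hprob : ∫ z, p z ∂μ = 1)
    (hsupp : ∀ z, p z = 0 → q z = 0)
    (h1 : Integrable (fun z => p z * L z) μ)
    (h1pos : 0 < ∫ z, p z * L z ∂μ)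
    (h2 : Integrable (fun z => q z * L z ^ (1 - γ)) μ)
    (h2pos : 0 < ∫ z, q z * L z ^ (1 - γ) ∂μ)
    (h3 : Integrable (fun z => q z ^ (1/γ) * p z ^ (1 - 1/γ)) μ)
    (h3pos : 0 < ∫ z, q z ^ (1/γ) * p z ^ (1 - 1/γ) ∂μ) :
    Real.log (∫ z, p z * L z ∂μ) ≥
      (1/(1-γ)) * Real.log (∫ z, q z * L z ^ (1 - γ) ∂μ)
      - (γ/(1-γ)) * Real.log (∫ z, q z ^ (1/γ) * p z ^ (1 - 1/γ) ∂μ) :=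
  fractional_lower_bound_general μ p L q γ hγ hp hL hq hsupp h1 h1pos h2pos h3 h3pos
end

section
/- Divergence property of the fractional bound: define, for probability densities p₀ (prior), p₁ (target), p₂ (approximation) with appropriate absolute continuity and γ ∈ (0,1), D^frac_γ(p₂‖p₁) = log ∫ p₁^{1/γ} p₀^{1−1/γ} dμ − (1/(1-γ)) log ∫ p₂ p₁^{1/γ−1} p₀^{1−1/γ} dμ + (γ/(1-γ)) log ∫ p₂^{1/γ} p₀^{1−1/γ} dμ. Then D^frac_γ(p₂‖p₁) ≥ 0, with equality when p₂ = p₁. -/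
/-!
Put `u = p₁ ^ (1/γ) p₀ ^ (1 - 1/γ)` and `v = p₂ ^ (1/γ) p₀ ^ (1 - 1/γ)`. Pointwise, the middle
integrand `p₂ p₁ ^ (1/γ - 1) p₀ ^ (1 - 1/γ)` is the geometric mean `u ^ (1-γ) v ^ γ`, so Hölder's
inequality with exponents `1/(1-γ)` and `1/γ` gives
`log ∫ u ^ (1-γ) v ^ γ ≤ (1-γ) log ∫ u + γ log ∫ v`, which is `(1-γ) D^frac_γ(p₂‖p₁) ≥ 0`.
At `p₂ = p₁` all three integrals equal `∫ u` and the coefficients `1 - 1/(1-γ) + γ/(1-γ)` cancel.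
-/

open MeasureTheory Real

section Holder

variable {α : Type*} [MeasurableSpace α] {μ : Measure α}

theorem MeasureTheory.Integrable.memLp_rpow_of_nonneg {f : α → ℝ} (hf : Integrable f μ)
    (hf0 : 0 ≤ᵐ[μ] f) {r : ℝ} (hr : 0 < r) :
    MemLp (fun x => f x ^ r) (ENNReal.ofReal (1 / r)) μ := by
  have h := (memLp_one_iff_integrable.2 hf).norm_rpow_div (ENNReal.ofReal r)
  rw [ENNReal.toReal_ofReal hr.le, one_div, ← ENNReal.ofReal_inv_of_pos hr, ← one_div] at h
  refine h.ae_eq ?_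
  filter_upwards [hf0] with x hx
  rw [Real.norm_of_nonneg hx]

theorem integral_rpow_mul_rpow_le_s15 {f g : α → ℝ} {θ : ℝ} (hθ : θ ∈ Set.Ioo 0 1)
    (hf0 : 0 ≤ᵐ[μ] f) (hg0 : 0 ≤ᵐ[μ] g) (hf : Integrable f μ) (hg : Integrable g μ) :
    ∫ a, f a ^ (1 - θ) * g a ^ θ ∂μ ≤ (∫ a, f a ∂μ) ^ (1 - θ) * (∫ a, g a ∂μ) ^ θ := by
  obtain ⟨hθ0, hθ1⟩ := hθ
  have h1θ : 0 < 1 - θ := sub_pos.2 hθ1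
  have hpq : (1 / (1 - θ)).HolderConjugate (1 / θ) :=
    Real.holderConjugate_iff.2 ⟨by rw [lt_div_iff₀ h1θ]; linarith, by simp⟩
  have hrpow_rpow_inv : ∀ {h : α → ℝ} {r : ℝ}, 0 ≤ᵐ[μ] h → r ≠ 0 →
      ∫ a, (h a ^ r) ^ (1 / r) ∂μ = ∫ a, h a ∂μ := fun hh hr =>
    integral_congr_ae <| by
      filter_upwards [hh] with x hx
      rw [one_div, Real.rpow_rpow_inv hx hr]
  have hHolder := integral_mul_le_Lp_mul_Lq_of_nonneg hpq
    (hf0.mono fun x hx => Real.rpow_nonneg hx _) (hg0.mono fun x hx => Real.rpow_nonneg hx _)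
    (hf.memLp_rpow_of_nonneg hf0 h1θ) (hg.memLp_rpow_of_nonneg hg0 hθ0)
  rwa [hrpow_rpow_inv hf0 h1θ.ne', hrpow_rpow_inv hg0 hθ0.ne', one_div_one_div,
    one_div_one_div] at hHolder

theorem log_integral_rpow_mul_rpow_le {f g : α → ℝ} {θ : ℝ} (hθ : θ ∈ Set.Ioo 0 1)
    (hf0 : 0 ≤ᵐ[μ] f) (hg0 : 0 ≤ᵐ[μ] g) (hf : Integrable f μ) (hg : Integrable g μ)
    (hpos : 0 < ∫ a, f a ^ (1 - θ) * g a ^ θ ∂μ) :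
    log (∫ a, f a ^ (1 - θ) * g a ^ θ ∂μ)
      ≤ (1 - θ) * log (∫ a, f a ∂μ) + θ * log (∫ a, g a ∂μ) := by
  have hHolder := integral_rpow_mul_rpow_le_s15 hθ hf0 hg0 hf hg
  -- `0 ^ t = 0` for `t ≠ 0`, so Hölder forces both integrals on the right to be positive.
  have hFpos : 0 < ∫ a, f a ∂μ := by
    refine (integral_nonneg_of_ae hf0).lt_of_ne fun hF => ?_
    rw [← hF, Real.zero_rpow (sub_ne_zero.2 hθ.2.ne'), zero_mul] at hHolder
    linarith
  have hGpos : 0 < ∫ a, g a ∂μ := by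
    refine (integral_nonneg_of_ae hg0).lt_of_ne fun hG => ?_
    rw [← hG, Real.zero_rpow hθ.1.ne', mul_zero] at hHolder
    linarith
  calc log (∫ a, f a ^ (1 - θ) * g a ^ θ ∂μ)
      ≤ log ((∫ a, f a ∂μ) ^ (1 - θ) * (∫ a, g a ∂μ) ^ θ) := log_le_log hpos hHolder
    _ = (1 - θ) * log (∫ a, f a ∂μ) + θ * log (∫ a, g a ∂μ) := by
      rw [log_mul (rpow_pos_of_pos hFpos _).ne' (rpow_pos_of_pos hGpos _).ne',
        log_rpow hFpos, log_rpow hGpos]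

end Holder

/- Lean's `0 ^ t = 0` for `t ≠ 0` makes both sides vanish at `w = 0`, although `1 - 1/θ < 0`. -/
theorem tilted_geom_mean_eq {θ x y w : ℝ} (hθ0 : θ ≠ 0) (hθ1 : θ ≠ 1)
    (hx : 0 ≤ x) (hy : 0 ≤ y) (hw : 0 ≤ w) :
    (y ^ (1 / θ) * w ^ (1 - 1 / θ)) ^ (1 - θ) * (x ^ (1 / θ) * w ^ (1 - 1 / θ)) ^ θ
      = x * y ^ (1 / θ - 1) * w ^ (1 - 1 / θ) := by
  have hexp : (1 - 1 / θ) * (1 - θ) + (1 - 1 / θ) * θ ≠ 0 := by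
    rw [← mul_add, sub_add_cancel, mul_one, sub_ne_zero, ne_comm, one_div, inv_ne_one]
    exact hθ1
  rw [mul_rpow (by positivity) (by positivity), mul_rpow (by positivity) (by positivity),
    ← rpow_mul hx, ← rpow_mul hy, ← rpow_mul hw, ← rpow_mul hw,
    one_div_mul_cancel hθ0, rpow_one, mul_sub, mul_one, one_div_mul_cancel hθ0,
    mul_mul_mul_comm, ← rpow_add' hw hexp, ← mul_add, sub_add_cancel, mul_one]
  ring

theorem dfrac_nonneg_and_eq_zero_general
    {Z : Type*} [MeasurableSpace Z] (μ : Measure Z)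
    (p₀ p₁ p₂ : Z → ℝ) (γ : ℝ) (hγ : γ ∈ Set.Ioo (0:ℝ) 1)
    (h0 : ∀ z, 0 ≤ p₀ z) (h1 : ∀ z, 0 ≤ p₁ z) (h2 : ∀ z, 0 ≤ p₂ z)
    (hA : Integrable (fun z => p₁ z ^ (1/γ) * p₀ z ^ (1 - 1/γ)) μ)
    (hBpos : 0 < ∫ z, p₂ z * p₁ z ^ (1/γ - 1) * p₀ z ^ (1 - 1/γ) ∂μ)
    (hC : Integrable (fun z => p₂ z ^ (1/γ) * p₀ z ^ (1 - 1/γ)) μ) :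
    (0 ≤ Real.log (∫ z, p₁ z ^ (1/γ) * p₀ z ^ (1 - 1/γ) ∂μ)
        - (1/(1-γ)) * Real.log (∫ z, p₂ z * p₁ z ^ (1/γ - 1) * p₀ z ^ (1 - 1/γ) ∂μ)
        + (γ/(1-γ)) * Real.log (∫ z, p₂ z ^ (1/γ) * p₀ z ^ (1 - 1/γ) ∂μ))
    ∧ (Real.log (∫ z, p₁ z ^ (1/γ) * p₀ z ^ (1 - 1/γ) ∂μ)
        - (1/(1-γ)) * Real.log (∫ z, p₁ z * p₁ z ^ (1/γ - 1) * p₀ z ^ (1 - 1/γ) ∂μ)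
        + (γ/(1-γ)) * Real.log (∫ z, p₁ z ^ (1/γ) * p₀ z ^ (1 - 1/γ) ∂μ) = 0) := by
  have h1γ : 0 < 1 - γ := sub_pos.2 hγ.2
  have hsplit : (fun z => p₂ z * p₁ z ^ (1/γ - 1) * p₀ z ^ (1 - 1/γ)) = fun z =>
      (p₁ z ^ (1/γ) * p₀ z ^ (1 - 1/γ)) ^ (1 - γ) * (p₂ z ^ (1/γ) * p₀ z ^ (1 - 1/γ)) ^ γ :=
    funext fun z => (tilted_geom_mean_eq hγ.1.ne' hγ.2.ne (h2 z) (h1 z) (h0 z)).symm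
  have hdiag : (fun z => p₁ z * p₁ z ^ (1/γ - 1) * p₀ z ^ (1 - 1/γ)) = fun z =>
      p₁ z ^ (1/γ) * p₀ z ^ (1 - 1/γ) := by
    funext z
    rw [mul_comm (p₁ z), ← rpow_add_one' (h1 z) (by simpa using hγ.1.ne'), sub_add_cancel]
  have hdiv : ∀ a b c : ℝ,
      a - 1/(1-γ) * b + γ/(1-γ) * c = ((1 - γ) * a + γ * c - b) / (1 - γ) := by
    intro a b c
    field_simp
    ring
  refine ⟨?_, ?_⟩
  · rw [hsplit] at hBpos ⊢
    have hHolder := log_integral_rpow_mul_rpow_le hγ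
      (.of_forall fun z => mul_nonneg (rpow_nonneg (h1 z) _) (rpow_nonneg (h0 z) _))
      (.of_forall fun z => mul_nonneg (rpow_nonneg (h2 z) _) (rpow_nonneg (h0 z) _)) hA hC hBpos
    rw [hdiv]
    exact div_nonneg (sub_nonneg.2 hHolder) h1γ.le
  · rw [hdiag, hdiv]
    ring

/-- The fractional divergence `D^frac_γ` is nonnegative, and vanishes at `p₂ = p₁`. -/
theorem dfrac_nonneg_and_eq_zero
    {Z : Type*} [MeasurableSpace Z] (μ : Measure Z)
    (p₀ p₁ p₂ : Z → ℝ) (γ : ℝ) (hγ : γ ∈ Set.Ioo (0:ℝ) 1)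
    (h0 : ∀ z, 0 ≤ p₀ z) (h1 : ∀ z, 0 ≤ p₁ z) (h2 : ∀ z, 0 ≤ p₂ z)
    (h0m : Measurable p₀) (h1m : Measurable p₁) (h2m : Measurable p₂)
    (h0prob : ∫ z, p₀ z ∂μ = 1) (h1prob : ∫ z, p₁ z ∂μ = 1) (h2prob : ∫ z, p₂ z ∂μ = 1)
    (hsupp0 : ∀ z, p₀ z = 0 → p₂ z = 0) (hsupp1 : ∀ z, p₁ z = 0 → p₂ z = 0)
    (hA : Integrable (fun z => p₁ z ^ (1/γ) * p₀ z ^ (1 - 1/γ)) μ)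
    (hApos : 0 < ∫ z, p₁ z ^ (1/γ) * p₀ z ^ (1 - 1/γ) ∂μ)
    (hB : Integrable (fun z => p₂ z * p₁ z ^ (1/γ - 1) * p₀ z ^ (1 - 1/γ)) μ)
    (hBpos : 0 < ∫ z, p₂ z * p₁ z ^ (1/γ - 1) * p₀ z ^ (1 - 1/γ) ∂μ)
    (hB1 : Integrable (fun z => p₁ z * p₁ z ^ (1/γ - 1) * p₀ z ^ (1 - 1/γ)) μ)
    (hB1pos : 0 < ∫ z, p₁ z * p₁ z ^ (1/γ - 1) * p₀ z ^ (1 - 1/γ) ∂μ)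
    (hC : Integrable (fun z => p₂ z ^ (1/γ) * p₀ z ^ (1 - 1/γ)) μ)
    (hCpos : 0 < ∫ z, p₂ z ^ (1/γ) * p₀ z ^ (1 - 1/γ) ∂μ) :
    (0 ≤ Real.log (∫ z, p₁ z ^ (1/γ) * p₀ z ^ (1 - 1/γ) ∂μ)
        - (1/(1-γ)) * Real.log (∫ z, p₂ z * p₁ z ^ (1/γ - 1) * p₀ z ^ (1 - 1/γ) ∂μ)
        + (γ/(1-γ)) * Real.log (∫ z, p₂ z ^ (1/γ) * p₀ z ^ (1 - 1/γ) ∂μ))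
    ∧ (Real.log (∫ z, p₁ z ^ (1/γ) * p₀ z ^ (1 - 1/γ) ∂μ)
        - (1/(1-γ)) * Real.log (∫ z, p₁ z * p₁ z ^ (1/γ - 1) * p₀ z ^ (1 - 1/γ) ∂μ)
        + (γ/(1-γ)) * Real.log (∫ z, p₁ z ^ (1/γ) * p₀ z ^ (1 - 1/γ) ∂μ) = 0) :=
  dfrac_nonneg_and_eq_zero_general μ p₀ p₁ p₂ γ hγ h0 h1 h2 hA hBpos hC
end

section
/- Reduction to Rényi divergence: with p₀, p₁, p₂ probability densities and γ ∈ (0,1), define p̃ᵢ(z) = pᵢ(z)^{1/γ} p₀(z)^{1−1/γ}/Zᵢ with Zᵢ = ∫ pᵢ^{1/γ} p₀^{1−1/γ} dμ for i = 1,2 (assumed finite and positive). Then D^frac_γ(p₂‖p₁) = (1/(γ−1)) log ∫ p̃₂(z)^γ p̃₁(z)^{1-γ} dμ, the Rényi divergence of order γ from p̃₂ to p̃₁. -/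
/-!
Writing `qᵢ = pᵢ^{1/γ} p₀^{1-1/γ}`, the weighted geometric mean `q₂^γ q₁^{1-γ}` equals
`p₂ p₁^{1/γ-1} p₀^{1-1/γ}`, because the two powers of `p₀^{1-1/γ}` recombine to it. Hence the
Rényi integral of the normalised densities `qᵢ / Zᵢ` is the middle integral of `D^frac_γ`
divided by `Z₂^γ Z₁^{1-γ}`, and taking logarithms gives the identity.
-/

open MeasureTheory Real

namespace Real

theorem rpow_mul_rpow_one_sub_self {x : ℝ} (hx : 0 ≤ x) (γ : ℝ) :
    x ^ γ * x ^ (1 - γ) = x := by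
  rw [← rpow_add' hx (by simp), add_sub_cancel, rpow_one]

theorem div_rpow_mul_div_rpow_one_sub {x y Z₁ Z₂ : ℝ} (hx : 0 ≤ x) (hy : 0 ≤ y)
    (hZ₁ : 0 ≤ Z₁) (hZ₂ : 0 ≤ Z₂) (γ : ℝ) :
    (x / Z₂) ^ γ * (y / Z₁) ^ (1 - γ) = (Z₂ ^ γ * Z₁ ^ (1 - γ))⁻¹ * (x ^ γ * y ^ (1 - γ)) := by
  rw [div_rpow hx hZ₂, div_rpow hy hZ₁]
  ring

theorem tilted_rpow_mul_tilted_rpow_one_sub {a b c : ℝ} (ha : 0 ≤ a) (hb : 0 ≤ b) (hc : 0 ≤ c)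
    {γ : ℝ} (hγ : γ ≠ 0) :
    (a ^ (1 / γ) * c ^ (1 - 1 / γ)) ^ γ * (b ^ (1 / γ) * c ^ (1 - 1 / γ)) ^ (1 - γ)
      = a * b ^ (1 / γ - 1) * c ^ (1 - 1 / γ) := by
  have hw : 0 ≤ c ^ (1 - 1 / γ) := rpow_nonneg hc _
  rw [mul_rpow (rpow_nonneg ha _) hw, mul_rpow (rpow_nonneg hb _) hw, ← rpow_mul ha,
    ← rpow_mul hb, one_div_mul_cancel hγ, rpow_one, show 1 / γ * (1 - γ) = 1 / γ - 1 by field_simp]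
  linear_combination (a * b ^ (1 / γ - 1)) * rpow_mul_rpow_one_sub_self hw γ

theorem log_inv_rpow_mul_rpow_mul {Z₁ Z₂ B : ℝ} (hZ₁ : 0 < Z₁) (hZ₂ : 0 < Z₂) (hB : 0 < B)
    (γ : ℝ) :
    log ((Z₂ ^ γ * Z₁ ^ (1 - γ))⁻¹ * B) = log B - γ * log Z₂ - (1 - γ) * log Z₁ := by
  rw [log_mul (by positivity) hB.ne', log_inv, log_mul (by positivity) (by positivity),
    log_rpow hZ₂, log_rpow hZ₁]
  ring

end Real

theorem dfrac_eq_renyi_general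
    {Z : Type*} [MeasurableSpace Z] (μ : Measure Z)
    (p₀ p₁ p₂ : Z → ℝ) (γ : ℝ) (hγ : γ ∈ Set.Ioo (0:ℝ) 1)
    (h0 : ∀ z, 0 ≤ p₀ z) (h1 : ∀ z, 0 ≤ p₁ z) (h2 : ∀ z, 0 ≤ p₂ z)
    (Z₁ Z₂ : ℝ)
    (hZ₁pos : 0 < Z₁)
    (hZ₂pos : 0 < Z₂)
    (hBpos : 0 < ∫ z, p₂ z * p₁ z ^ (1/γ - 1) * p₀ z ^ (1 - 1/γ) ∂μ) :
    Real.log Z₁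
      - (1/(1-γ)) * Real.log (∫ z, p₂ z * p₁ z ^ (1/γ - 1) * p₀ z ^ (1 - 1/γ) ∂μ)
      + (γ/(1-γ)) * Real.log Z₂
    = (1/(γ-1)) * Real.log (∫ z,
        (p₂ z ^ (1/γ) * p₀ z ^ (1 - 1/γ) / Z₂) ^ γ *
        (p₁ z ^ (1/γ) * p₀ z ^ (1 - 1/γ) / Z₁) ^ (1-γ) ∂μ) := by
  obtain ⟨hγ0, hγ1⟩ := hγ
  have pointwise (z : Z) :
      (p₂ z ^ (1/γ) * p₀ z ^ (1 - 1/γ) / Z₂) ^ γ * (p₁ z ^ (1/γ) * p₀ z ^ (1 - 1/γ) / Z₁) ^ (1-γ)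
        = (Z₂ ^ γ * Z₁ ^ (1 - γ))⁻¹ * (p₂ z * p₁ z ^ (1/γ - 1) * p₀ z ^ (1 - 1/γ)) := by
    have hw : 0 ≤ p₀ z ^ (1 - 1/γ) := rpow_nonneg (h0 z) _
    rw [div_rpow_mul_div_rpow_one_sub (mul_nonneg (rpow_nonneg (h2 z) _) hw)
      (mul_nonneg (rpow_nonneg (h1 z) _) hw) hZ₁pos.le hZ₂pos.le,
      tilted_rpow_mul_tilted_rpow_one_sub (h2 z) (h1 z) (h0 z) hγ0.ne']
  simp only [pointwise]
  rw [integral_const_mul, log_inv_rpow_mul_rpow_mul hZ₁pos hZ₂pos hBpos]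
  have : (1 : ℝ) - γ ≠ 0 := by linarith
  have : γ - 1 ≠ 0 := by linarith
  field_simp
  ring

/-- `D^frac_γ` reduces to the Rényi divergence of order `γ` between the tilted
densities `p̃ᵢ = pᵢ^{1/γ} p₀^{1-1/γ}/Zᵢ`. -/
theorem dfrac_eq_renyi
    {Z : Type*} [MeasurableSpace Z] (μ : Measure Z)
    (p₀ p₁ p₂ : Z → ℝ) (γ : ℝ) (hγ : γ ∈ Set.Ioo (0:ℝ) 1)
    (h0 : ∀ z, 0 ≤ p₀ z) (h1 : ∀ z, 0 ≤ p₁ z) (h2 : ∀ z, 0 ≤ p₂ z)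
    (h0m : Measurable p₀) (h1m : Measurable p₁) (h2m : Measurable p₂)
    (h0prob : ∫ z, p₀ z ∂μ = 1) (h1prob : ∫ z, p₁ z ∂μ = 1) (h2prob : ∫ z, p₂ z ∂μ = 1)
    (hsupp0 : ∀ z, p₀ z = 0 → p₂ z = 0) (hsupp1 : ∀ z, p₁ z = 0 → p₂ z = 0)
    (Z₁ Z₂ : ℝ)
    (hZ₁ : Z₁ = ∫ z, p₁ z ^ (1/γ) * p₀ z ^ (1 - 1/γ) ∂μ) (hZ₁pos : 0 < Z₁)
    (hZ₂ : Z₂ = ∫ z, p₂ z ^ (1/γ) * p₀ z ^ (1 - 1/γ) ∂μ) (hZ₂pos : 0 < Z₂)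
    (hZ₁int : Integrable (fun z => p₁ z ^ (1/γ) * p₀ z ^ (1 - 1/γ)) μ)
    (hZ₂int : Integrable (fun z => p₂ z ^ (1/γ) * p₀ z ^ (1 - 1/γ)) μ)
    (hB : Integrable (fun z => p₂ z * p₁ z ^ (1/γ - 1) * p₀ z ^ (1 - 1/γ)) μ)
    (hBpos : 0 < ∫ z, p₂ z * p₁ z ^ (1/γ - 1) * p₀ z ^ (1 - 1/γ) ∂μ) :
    Real.log Z₁
      - (1/(1-γ)) * Real.log (∫ z, p₂ z * p₁ z ^ (1/γ - 1) * p₀ z ^ (1 - 1/γ) ∂μ)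
      + (γ/(1-γ)) * Real.log Z₂
    = (1/(γ-1)) * Real.log (∫ z,
        (p₂ z ^ (1/γ) * p₀ z ^ (1 - 1/γ) / Z₂) ^ γ *
        (p₁ z ^ (1/γ) * p₀ z ^ (1 - 1/γ) / Z₁) ^ (1-γ) ∂μ) :=
  dfrac_eq_renyi_general μ p₀ p₁ p₂ γ hγ h0 h1 h2 Z₁ Z₂ hZ₁pos hZ₂pos hBpos
end
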